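/- arXiv:2511.17503 — 2 statements merged into one kernel-verified Lean document; each statement's English description precedes it below -/
import Mathlib

section
/- Every Hermitian self-orthogonal linear code of even length n over F_{q^2} is contained in a Hermitian self-dual code of length n (a code of dimension n/2 equal to its own Hermitian dual). -/
/-! Let `σ x = x ^ q`, an involutive automorphism of `K`, and `h x y = ∑ σ (x i) * y i`. The norm
`c ↦ σ c * c = c ^ (q + 1)` maps `K` onto the fixed field of `σ`, so by completing the square every
Hermitian form in two variables has a nontrivial zero. Hence, if a self-orthogonal `D` satisfies
`dim D + 2 ≤ dim D^⊥ = n - dim D`, some isotropic vector of `D^⊥ \ D` enlarges it. A maximal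
self-orthogonal code containing `C` therefore has dimension `n / 2` and equals its dual. -/

open Module

namespace FiniteField
variable {K : Type*} [Field K] [Fintype K] {q : ℕ}

theorem exists_pow_succ_eq_of_pow_eq (hK : Fintype.card K = q ^ 2) {t : K} (ht : t ^ q = t) :
    ∃ c : K, c ^ (q + 1) = t := by
  rcases eq_or_ne t 0 with rfl | ht0
  · exact ⟨0, zero_pow q.succ_ne_zero⟩
  have hq : 1 ≤ q := by
    by_contra! h
    have := Fintype.one_lt_card (α := K)
    simp_all
  have hcard : Nat.card Kˣ = (q + 1) * (q - 1) := by
    rw [Nat.card_units, Nat.card_eq_fintype_card, hK, ← Nat.sq_sub_sq, one_pow]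
  -- in the cyclic group `Kˣ` of order `(q + 1) * (q - 1)`, the `(q + 1)`-th powers and the
  -- solutions of `x ^ (q - 1) = 1` both form the subgroup of order `q - 1`
  have hle : (powMonoidHom (q + 1) : Kˣ →* Kˣ).range ≤ (powMonoidHom (q - 1)).ker := by
    rintro _ ⟨c, rfl⟩
    rw [MonoidHom.mem_ker, powMonoidHom_apply, powMonoidHom_apply, ← pow_mul, ← hcard,
      pow_card_eq_one']
  have heq := Subgroup.eq_of_le_of_card_ge hle (by
    rw [IsCyclic.card_powMonoidHom_range, IsCyclic.card_powMonoidHom_ker, hcard,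
      Nat.gcd_mul_left_left, Nat.gcd_mul_right_left, Nat.mul_div_cancel_left _ (by omega)])
  have hmem : Units.mk0 t ht0 ∈ (powMonoidHom (q - 1) : Kˣ →* Kˣ).ker := by
    rw [MonoidHom.mem_ker, powMonoidHom_apply, Units.ext_iff]
    simp only [Units.val_pow_eq_pow_val, Units.val_mk0, Units.val_one]
    refine mul_right_cancel₀ ht0 ?_
    rw [← pow_succ, Nat.sub_add_cancel hq, ht, one_mul]
  obtain ⟨c, hc⟩ := heq ▸ hmem
  exact ⟨c, by simpa [Units.ext_iff] using hc⟩

theorem exists_ringHom_pow_eq (hK : Fintype.card K = q ^ 2) : ∃ σ : K →+* K, ∀ x, σ x = x ^ q := by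
  obtain ⟨p, hchar, m, hp, hpm⟩ := FiniteField.card' K
  obtain ⟨k, -, rfl⟩ := (Nat.dvd_prime_pow hp).1 (hpm ▸ hK ▸ dvd_pow_self q two_ne_zero)
  have : Fact p.Prime := ⟨hp⟩
  exact ⟨iterateFrobenius K p k, iterateFrobenius_def p k⟩
end FiniteField

namespace Submodule
variable {K V : Type*} [Field K] [AddCommGroup V] [Module K V] {σ : K →+* K}

theorem finrank_map_of_injective [RingHomSurjective σ] {W : Type*} [AddCommGroup W] [Module K W]
    (f : V →ₛₗ[σ] W) (hf : Function.Injective f) (p : Submodule K V) :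
    finrank K (p.map f) = finrank K p := by
  rw [finrank_eq_spanFinrank_of_free, finrank_eq_spanFinrank_of_free, spanFinrank_top,
    spanFinrank_top, spanFinrank_map_eq_of_injective f hf]

variable {B : V →ₛₗ[σ] V →ₗ[K] K}

theorem orthogonalBilin_eq_dualCoannihilator_map [RingHomSurjective σ] (S : Submodule K V) :
    S.orthogonalBilin B = (S.map B).dualCoannihilator := by
  ext y
  simp [mem_dualCoannihilator]

theorem finrank_add_finrank_orthogonalBilin [RingHomSurjective σ] [FiniteDimensional K V]
    (hB : Function.Injective B) (S : Submodule K V) :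
    finrank K S + finrank K (S.orthogonalBilin B) = finrank K V := by
  rw [orthogonalBilin_eq_dualCoannihilator_map, ← finrank_map_of_injective B hB,
    Subspace.finrank_add_finrank_dualCoannihilator_eq]

theorem orthogonalBilin_sup (S T : Submodule K V) :
    (S ⊔ T).orthogonalBilin B = S.orthogonalBilin B ⊓ T.orthogonalBilin B := by
  refine le_antisymm (le_inf (orthogonalBilin_le le_sup_left) (orthogonalBilin_le le_sup_right)) ?_
  rintro y ⟨hS, hT⟩ x hx
  obtain ⟨s, hs, t, ht, rfl⟩ := mem_sup.1 hx
  simp [hS s hs, hT t ht]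

theorem le_orthogonalBilin_comm (hB : B.IsRefl) {S T : Submodule K V} :
    S ≤ T.orthogonalBilin B ↔ T ≤ S.orthogonalBilin B :=
  ⟨fun h _ hx _ hy => hB _ _ (h hy _ hx), fun h _ hx _ hy => hB _ _ (h hy _ hx)⟩

theorem span_singleton_le_orthogonalBilin_self {u : V} (hu : B u u = 0) :
    K ∙ u ≤ (K ∙ u).orthogonalBilin B := by
  rw [span_singleton_le_iff_mem]
  intro x hx
  obtain ⟨a, rfl⟩ := mem_span_singleton.1 hx
  simp [hu]

theorem sup_span_singleton_le_orthogonalBilin (hB : B.IsRefl) {D : Submodule K V}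
    (hD : D ≤ D.orthogonalBilin B) {u : V} (hu : u ∈ D.orthogonalBilin B) (huu : B u u = 0) :
    D ⊔ K ∙ u ≤ (D ⊔ K ∙ u).orthogonalBilin B := by
  have huD : K ∙ u ≤ D.orthogonalBilin B := (span_singleton_le_iff_mem _ _).2 hu
  rw [orthogonalBilin_sup]
  exact sup_le (le_inf hD ((le_orthogonalBilin_comm hB).1 huD))
    (le_inf huD (span_singleton_le_orthogonalBilin_self huu))

end Submodule

section Involution
variable {K : Type*} [Field K] {σ : K →+* K} [RingHomInvPair σ σ]

theorem exists_ne_zero_hermitian_eq_zero (hnorm : ∀ t, σ t = t → ∃ c, σ c * c = t)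
    {α γ : K} (hα : σ α = α) (hγ : σ γ = γ) (β : K) :
    ∃ a b : K, (a, b) ≠ 0 ∧ σ a * a * α + σ a * b * β + σ b * a * σ β + σ b * b * γ = 0 := by
  rcases eq_or_ne α 0 with rfl | hα0
  · exact ⟨1, 0, by simp, by simp⟩
  -- completing the square: `α • H(a, 1) = N(α a + β) + (α γ - N β)`
  obtain ⟨c, hc⟩ := hnorm (σ β * β - α * γ) (by simp [hα, hγ, mul_comm])
  refine ⟨(c - β) / α, 1, by simp, ?_⟩
  simp only [map_div₀, map_sub, map_one, hα]
  field_simp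
  linear_combination hc
end Involution

section Hermitian
variable {K V : Type*} [Field K] [AddCommGroup V] [Module K V] {σ : K →+* K} [RingHomInvPair σ σ]
  {B : V →ₛₗ[σ] V →ₗ[K] K}

theorem LinearMap.IsSymm.exists_ne_zero_apply_self_eq_zero
    (hnorm : ∀ t, σ t = t → ∃ c, σ c * c = t) (hB : B.IsSymm) (v w : V) :
    ∃ a b : K, (a, b) ≠ 0 ∧ B (a • v + b • w) (a • v + b • w) = 0 := by
  obtain ⟨a, b, hab, h⟩ :=
    exists_ne_zero_hermitian_eq_zero hnorm (hB.eq v v) (hB.eq w w) (B v w)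
  refine ⟨a, b, hab, ?_⟩
  simp only [map_add, map_smulₛₗ, LinearMap.add_apply, LinearMap.smul_apply, smul_eq_mul,
    ← hB.eq v w]
  linear_combination h

variable [FiniteDimensional K V]

theorem LinearMap.IsSymm.exists_apply_self_eq_zero_mem_not_mem
    (hnorm : ∀ t, σ t = t → ∃ c, σ c * c = t) (hB : B.IsSymm) {C W : Submodule K V} (hCW : C ≤ W)
    (hdim : finrank K C + 2 ≤ finrank K W) : ∃ u ∈ W, u ∉ C ∧ B u u = 0 := by
  obtain ⟨v, hvW, hvC⟩ := SetLike.exists_of_lt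
    (Submodule.lt_of_le_of_finrank_lt_finrank hCW (by omega))
  have hCv : C ⊔ K ∙ v < W := by
    refine Submodule.lt_of_le_of_finrank_lt_finrank
      (sup_le hCW ((Submodule.span_singleton_le_iff_mem _ _).2 hvW)) ?_
    rw [Submodule.finrank_sup_span_singleton hvC]
    omega
  obtain ⟨w, hwW, hwCv⟩ := SetLike.exists_of_lt hCv
  obtain ⟨a, b, hab, h⟩ := hB.exists_ne_zero_apply_self_eq_zero hnorm v w
  refine ⟨a • v + b • w, W.add_mem (W.smul_mem a hvW) (W.smul_mem b hwW), fun hu => ?_, h⟩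
  rcases eq_or_ne b 0 with rfl | hb
  · have ha : a ≠ 0 := by simpa using hab
    refine hvC ?_
    simpa [ha] using C.smul_mem a⁻¹ hu
  · refine hwCv ?_
    have : w = b⁻¹ • (a • v + b • w) - (b⁻¹ * a) • v := by
      rw [smul_add, smul_smul, smul_smul, inv_mul_cancel₀ hb, one_smul]; abel
    rw [this]
    exact Submodule.sub_mem _ (Submodule.mem_sup_left (C.smul_mem _ hu))
      (Submodule.mem_sup_right (Submodule.smul_mem _ _ (Submodule.mem_span_singleton_self v)))

theorem LinearMap.IsSymm.exists_le_orthogonalBilin_eq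
    (hnorm : ∀ t, σ t = t → ∃ c, σ c * c = t) (hB : B.IsSymm) (hB' : Function.Injective B)
    (hV : Even (finrank K V)) {C : Submodule K V} (hC : C ≤ C.orthogonalBilin B) :
    ∃ D, C ≤ D ∧ D.orthogonalBilin B = D := by
  obtain ⟨D, ⟨hCD, hD⟩, hmax⟩ := set_has_maximal_iff_noetherian.2 inferInstance
    {D | C ≤ D ∧ D ≤ D.orthogonalBilin B} ⟨C, le_rfl, hC⟩
  refine ⟨D, hCD, (Submodule.eq_of_le_of_finrank_le hD ?_).symm⟩
  by_contra! hlt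
  have hdim := Submodule.finrank_add_finrank_orthogonalBilin hB' D
  obtain ⟨k, hk⟩ := hV
  obtain ⟨u, hu, huD, huu⟩ := hB.exists_apply_self_eq_zero_mem_not_mem hnorm hD (by omega)
  refine hmax (D ⊔ K ∙ u) ⟨hCD.trans le_sup_left,
    Submodule.sup_span_singleton_le_orthogonalBilin hB.isRefl hD hu huu⟩ ?_
  exact left_lt_sup.2 fun h => huD (h (Submodule.mem_span_singleton_self u))

end Hermitian

section HermitianForm
variable {K : Type*} [Field K] (σ : K →+* K) (ι : Type*) [Fintype ι]

def hermitianForm : (ι → K) →ₛₗ[σ] (ι → K) →ₗ[K] K :=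
  LinearMap.mk₂'ₛₗ σ (RingHom.id K) (fun x y => ∑ i, σ (x i) * y i)
    (by simp [add_mul, Finset.sum_add_distrib]) (by simp [Finset.mul_sum, mul_assoc])
    (by simp [mul_add, Finset.sum_add_distrib]) (by simp [Finset.mul_sum, mul_left_comm])

variable {σ ι}

@[simp]
theorem hermitianForm_apply (x y : ι → K) : hermitianForm σ ι x y = ∑ i, σ (x i) * y i := rfl

theorem hermitianForm_isSymm [RingHomInvPair σ σ] : (hermitianForm σ ι).IsSymm :=
  ⟨fun x y => by simp [mul_comm]⟩

theorem hermitianForm_injective : Function.Injective (hermitianForm σ ι) := by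
  classical
  intro x y h
  funext i
  apply σ.injective
  simpa [Pi.single_apply] using LinearMap.congr_fun h (Pi.single i 1)

end HermitianForm

theorem stmt5_general (q : ℕ)
    (K : Type) [Field K] [Fintype K] (hK : Fintype.card K = q ^ 2)
    (n : ℕ) (hn : Even n)
    (C : Submodule K (Fin n → K))
    (hso : ∀ x ∈ C, ∀ y ∈ C, ∑ i, (x i) ^ q * y i = 0) :
    ∃ D : Submodule K (Fin n → K), C ≤ D ∧ Module.finrank K D = n / 2 ∧
      (∀ x ∈ D, ∀ y ∈ D, ∑ i, (x i) ^ q * y i = 0) ∧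
      (∀ x : Fin n → K, (∀ c ∈ D, ∑ i, (x i) ^ q * c i = 0) → x ∈ D) := by
  obtain ⟨σ, hσ⟩ := FiniteField.exists_ringHom_pow_eq hK
  have hσσ : σ.comp σ = RingHom.id K := RingHom.ext fun x => by
    rw [RingHom.comp_apply, hσ, hσ, ← pow_mul, ← sq, ← hK, FiniteField.pow_card, RingHom.id_apply]
  have : RingHomInvPair σ σ := ⟨hσσ, hσσ⟩
  have hnorm (t : K) (ht : σ t = t) : ∃ c, σ c * c = t := by
    simpa [hσ, pow_succ] using FiniteField.exists_pow_succ_eq_of_pow_eq hK (hσ t ▸ ht)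
  have hB (x y : Fin n → K) : hermitianForm σ (Fin n) x y = ∑ i, x i ^ q * y i := by
    simp [hσ]
  obtain ⟨D, hCD, hD⟩ := hermitianForm_isSymm.exists_le_orthogonalBilin_eq hnorm
    hermitianForm_injective (by simpa using hn) (C := C) fun y hy x hx => hB x y ▸ hso x hx y hy
  have hdim := Submodule.finrank_add_finrank_orthogonalBilin
    (hermitianForm_injective (σ := σ) (ι := Fin n)) D
  rw [hD, finrank_fin_fun] at hdim
  refine ⟨D, hCD, by omega, fun x hx y hy => ?_, fun x hx => ?_⟩
  · rw [← hB]
    exact (hD.symm ▸ hy : y ∈ D.orthogonalBilin _) x hx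
  · rw [← hD]
    exact fun c hc => hermitianForm_isSymm.isRefl _ _ (hB x c ▸ hx c hc)

/-- every Hermitian self-orthogonal code of even length n over F_{q^2}
is contained in a Hermitian self-dual code (dimension n/2, equal to its own
Hermitian dual). -/
theorem stmt5 (q : ℕ) (hq : ∃ p e : ℕ, p.Prime ∧ 0 < e ∧ q = p ^ e)
    (K : Type) [Field K] [Fintype K] (hK : Fintype.card K = q ^ 2)
    (n : ℕ) (hn : Even n)
    (C : Submodule K (Fin n → K))
    (hso : ∀ x ∈ C, ∀ y ∈ C, ∑ i, (x i) ^ q * y i = 0) :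
    ∃ D : Submodule K (Fin n → K), C ≤ D ∧ Module.finrank K D = n / 2 ∧
      (∀ x ∈ D, ∀ y ∈ D, ∑ i, (x i) ^ q * y i = 0) ∧
      (∀ x : Fin n → K, (∀ c ∈ D, ∑ i, (x i) ^ q * c i = 0) → x ∈ D) :=
  stmt5_general q K hK n hn C hso
end

section
/- Let q = 2^m, and let C be a k-dimensional Euclidean self-orthogonal subspace of F_q^n with n ≥ 2k+2. Then there exists a (k+1)-dimensional Euclidean self-orthogonal subspace C' of F_q^n containing C. -/
/-!
In characteristic 2 the Frobenius gives `x ⬝ᵥ x = (∑ i, x i) ^ 2 = (1 ⬝ᵥ x) ^ 2`, so a vector is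
isotropic exactly when it is orthogonal to the all-ones vector `1`. Hence `C` lies in
`W = (C + F ∙ 1)ᗮ`, every vector of `W` is isotropic and orthogonal to `C`, and
`dim W ≥ n - (k + 1) > k`. Any `v ∈ W \ C` then gives the self-orthogonal code `C + F ∙ v`.
-/

open Module Submodule Matrix

namespace LinearMap.BilinForm

variable {R M : Type*} [CommRing R] [AddCommGroup M] [Module R M] {B : LinearMap.BilinForm R M}

theorem orthogonal_sup (N L : Submodule R M) :
    B.orthogonal (N ⊔ L) = B.orthogonal N ⊓ B.orthogonal L := by
  ext m
  simp only [mem_inf, mem_orthogonal_iff]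
  change N ⊔ L ≤ ker (B.flip m) ↔ N ≤ ker (B.flip m) ∧ L ≤ ker (B.flip m)
  exact sup_le_iff

theorem mem_orthogonal_span_singleton_iff {x m : M} :
    m ∈ B.orthogonal (R ∙ x) ↔ B x m = 0 := by
  simp only [mem_orthogonal_iff, mem_span_singleton]
  refine ⟨fun h ↦ h x ⟨1, one_smul R x⟩, ?_⟩
  rintro h _ ⟨a, rfl⟩
  simp [h]

theorem sup_span_singleton_le_orthogonal (hB : B.IsRefl) {C : Submodule R M} {v : M}
    (hC : C ≤ B.orthogonal C) (hv : v ∈ B.orthogonal C) (hvv : B v v = 0) :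
    C ⊔ R ∙ v ≤ B.orthogonal (C ⊔ R ∙ v) := by
  have hvC : C ≤ B.orthogonal (R ∙ v) := fun c hc ↦
    mem_orthogonal_span_singleton_iff.mpr (hB _ _ (hv c hc))
  have hvv' : R ∙ v ≤ B.orthogonal (R ∙ v) :=
    (span_singleton_le_iff_mem _ _).mpr (mem_orthogonal_span_singleton_iff.mpr hvv)
  rw [orthogonal_sup]
  exact le_inf (sup_le hC ((span_singleton_le_iff_mem _ _).mpr hv)) (sup_le hvC hvv')

end LinearMap.BilinForm

open LinearMap.BilinForm

theorem dotProduct_self_eq_sq_sum {R ι : Type*} [CommSemiring R] [ExpChar R 2] [Fintype ι]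
    (v : ι → R) : v ⬝ᵥ v = (∑ i, v i) ^ 2 := by
  rw [sum_pow_char]
  simp only [dotProduct, sq]

theorem dotProduct_self_eq_zero_iff {R ι : Type*} [CommSemiring R] [NoZeroDivisors R]
    [ExpChar R 2] [Fintype ι] {v : ι → R} : v ⬝ᵥ v = 0 ↔ 1 ⬝ᵥ v = 0 := by
  rw [dotProduct_self_eq_sq_sum, one_dotProduct, pow_eq_zero_iff two_ne_zero]

theorem charP_two_of_card_eq_two_pow {F : Type*} [Field F] [Fintype F] {m : ℕ}
    (hF : Fintype.card F = 2 ^ m) : CharP F 2 := by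
  refine ringChar.of_eq (FiniteField.even_card_iff_char_two.mpr ?_)
  have hm : m ≠ 0 := by
    rintro rfl
    exact (Fintype.one_lt_card (α := F)).ne' hF
  rw [hF, Nat.pow_mod, Nat.mod_self, zero_pow hm, Nat.zero_mod]

theorem stmt9_general (m : ℕ)
    (F : Type) [Field F] [Fintype F] (hF : Fintype.card F = 2 ^ m)
    (n k : ℕ) (hn : n ≥ 2 * k + 2)
    (C : Submodule F (Fin n → F)) (hdim : Module.finrank F C = k)
    (hso : ∀ x ∈ C, ∀ y ∈ C, ∑ i, x i * y i = 0) :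
    ∃ C' : Submodule F (Fin n → F), C ≤ C' ∧ Module.finrank F C' = k + 1 ∧
      ∀ x ∈ C', ∀ y ∈ C', ∑ i, x i * y i = 0 := by
  have := charP_two_of_card_eq_two_pow hF
  let B : LinearMap.BilinForm F (Fin n → F) := dotProductBilin F F
  have hB : B.IsRefl := fun x y h ↦ by rwa [dotProductBilin_apply_apply, dotProduct_comm] at h
  have hC : C ≤ B.orthogonal C := fun y hy x hx ↦ hso x hx y hy
  have hCW : C ≤ B.orthogonal (C ⊔ F ∙ 1) := by
    rw [orthogonal_sup]
    exact le_inf hC fun c hc ↦ mem_orthogonal_span_singleton_iff.mpr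
      (dotProduct_self_eq_zero_iff.mp (hso c hc c hc))
  have hkW : k < finrank F (B.orthogonal (C ⊔ F ∙ 1)) := by
    have hsup : finrank F ↥(C ⊔ F ∙ 1) ≤ k + 1 := calc
      _ ≤ finrank F C + finrank F (F ∙ (1 : Fin n → F)) := finrank_add_le_finrank_add_finrank _ _
      _ ≤ k + 1 := by
        rw [hdim]
        gcongr
        exact (finrank_span_le_card _).trans (by simp)
    have := finrank_add_finrank_orthogonal' (B := B) (C ⊔ F ∙ 1)
    simp only [finrank_fin_fun] at this
    omega
  obtain ⟨v, hvW, hvC⟩ := SetLike.exists_of_lt (lt_of_le_of_finrank_lt_finrank hCW (hdim ▸ hkW))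
  rw [orthogonal_sup] at hvW
  have hvv : B v v = 0 :=
    dotProduct_self_eq_zero_iff (v := v) |>.mpr (mem_orthogonal_span_singleton_iff.mp hvW.2)
  refine ⟨C ⊔ F ∙ v, le_sup_left, by rw [finrank_sup_span_singleton hvC, hdim], ?_⟩
  exact fun x hx y hy ↦ sup_span_singleton_le_orthogonal hB hC hvW.1 hvv hy x hx

/-- over F_q with q = 2^m, every k-dimensional Euclidean self-orthogonal
subspace of F_q^n with n ≥ 2k+2 extends to a (k+1)-dimensional one. -/
theorem stmt9 (m : ℕ) (hm : 0 < m)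
    (F : Type) [Field F] [Fintype F] (hF : Fintype.card F = 2 ^ m)
    (n k : ℕ) (hn : n ≥ 2 * k + 2)
    (C : Submodule F (Fin n → F)) (hdim : Module.finrank F C = k)
    (hso : ∀ x ∈ C, ∀ y ∈ C, ∑ i, x i * y i = 0) :
    ∃ C' : Submodule F (Fin n → F), C ≤ C' ∧ Module.finrank F C' = k + 1 ∧
      ∀ x ∈ C', ∀ y ∈ C', ∑ i, x i * y i = 0 :=
  stmt9_general m F hF n k hn C hdim hso
end
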